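/- Let k ≥ 1 be real and T₀ ≥ 3. Then ∏_{p ≤ T₀} (1 + k²/p) ≥ exp(−2k³ + ∑_{p ≤ T₀} k²/p); in particular if ∑_{p ≤ T₀} 1/p ≥ log log T then ∏_{p ≤ T₀}(1 + k²/p) ≥ e^{−2k³}(log T)^{k²}. -/

import Mathlib

/-!
With `c = k²` and `f x = x - log (1 + x) ≥ 0`, the product equals `exp (∑ c/p - ∑ f (c/p))`.
For `p ≤ c` use `f x ≤ x` and `∑_{n ≤ c} 1/n ≤ 1 + log c`; for `p > c` use `f x ≤ x²/2` and
`∑_{n > ⌊c⌋} 1/n² ≤ 2/(⌊c⌋ + 1) < 2/c`. Hence `∑ f (c/p) ≤ c (log c + 2) = k² (2 log k + 2) ≤ 2k³`.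
The second claim follows from `(log T)^(k²) = exp (k² log log T)`.
-/

open Finset Real

lemma Real.sub_log_one_add_le_sq_div_two {x : ℝ} (hx : 0 ≤ x) : x - log (1 + x) ≤ x ^ 2 / 2 := by
  have h := le_log_one_add_of_nonneg hx
  rw [div_le_iff₀ (by linarith)] at h
  nlinarith [pow_nonneg hx 3]

lemma sum_inv_filter_le_harmonic (S : Finset ℕ) (m : ℕ) :
    ∑ n ∈ S with n ≤ m, (n : ℝ)⁻¹ ≤ harmonic m := by
  calc ∑ n ∈ S with n ≤ m, (n : ℝ)⁻¹ ≤ ∑ n ∈ range (m + 1), (n : ℝ)⁻¹ := by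
        refine sum_le_sum_of_subset_of_nonneg (fun n hn => ?_) (fun _ _ _ => by positivity)
        simpa [Nat.lt_succ_iff] using (mem_filter.mp hn).2
    _ = harmonic m := by simp [harmonic, sum_range_succ']

lemma sum_inv_sq_filter_lt_le (S : Finset ℕ) (m : ℕ) :
    ∑ n ∈ S with m < n, ((n : ℝ) ^ 2)⁻¹ ≤ 2 / (m + 1) := by
  calc ∑ n ∈ S with m < n, ((n : ℝ) ^ 2)⁻¹ ≤ ∑ n ∈ Ioo m (S.sup id + 1), ((n : ℝ) ^ 2)⁻¹ := by
        refine sum_le_sum_of_subset_of_nonneg (fun n hn => ?_) (fun _ _ _ => by positivity)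
        obtain ⟨hS, hm⟩ := mem_filter.mp hn
        exact mem_Ioo.mpr ⟨hm, Nat.lt_succ_of_le (le_sup (f := id) hS)⟩
    _ ≤ 2 / (m + 1) := sum_Ioo_inv_sq_le m _

lemma sum_div_sub_log_one_add_div_le (S : Finset ℕ) {c : ℝ} (hc : 1 ≤ c) :
    ∑ n ∈ S, (c / n - log (1 + c / n)) ≤ c * (log c + 2) := by
  set m := ⌊c⌋₊
  have hm : 1 ≤ m := Nat.le_floor (by exact_mod_cast hc)
  have hmc : (m : ℝ) ≤ c := Nat.floor_le (by linarith)
  have hcm : c < m + 1 := Nat.lt_floor_add_one c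
  have hdiv_nonneg : ∀ n : ℕ, 0 ≤ c / n := fun n => by positivity
  rw [← sum_filter_add_sum_filter_not S (· ≤ m)]
  have small : ∑ n ∈ S with n ≤ m, (c / n - log (1 + c / n)) ≤ c * (1 + log c) :=
    calc ∑ n ∈ S with n ≤ m, (c / n - log (1 + c / n))
        ≤ ∑ n ∈ S with n ≤ m, c * (n : ℝ)⁻¹ := by
          refine sum_le_sum fun n _ => ?_
          have := log_nonneg (le_add_of_nonneg_right (hdiv_nonneg n))
          rw [← div_eq_mul_inv]; linarith
      _ ≤ c * (1 + log m) := by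
          rw [← mul_sum]
          gcongr
          exact (sum_inv_filter_le_harmonic S m).trans (harmonic_le_one_add_log m)
      _ ≤ c * (1 + log c) := by gcongr
  have large : ∑ n ∈ S with ¬n ≤ m, (c / n - log (1 + c / n)) ≤ c :=
    calc ∑ n ∈ S with ¬n ≤ m, (c / n - log (1 + c / n))
        ≤ ∑ n ∈ S with m < n, c ^ 2 / 2 * ((n : ℝ) ^ 2)⁻¹ := by
          simp only [not_le]
          refine sum_le_sum fun n _ => ?_
          calc _ ≤ (c / n) ^ 2 / 2 := sub_log_one_add_le_sq_div_two (hdiv_nonneg n)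
            _ = _ := by ring
      _ ≤ c ^ 2 / 2 * (2 / (m + 1)) := by
          rw [← mul_sum]
          gcongr
          exact sum_inv_sq_filter_lt_le S m
      _ ≤ c := by
          rw [mul_div_assoc', div_le_iff₀ (by positivity)]
          nlinarith
  linarith

lemma exp_sum_sub_le_prod_one_add {ι : Type*} (s : Finset ι) (a : ι → ℝ) {B : ℝ}
    (ha : ∀ i ∈ s, 0 ≤ a i) (hB : ∑ i ∈ s, (a i - log (1 + a i)) ≤ B) :
    exp (∑ i ∈ s, a i - B) ≤ ∏ i ∈ s, (1 + a i) := by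
  have hlog : ∑ i ∈ s, a i - B ≤ ∑ i ∈ s, log (1 + a i) := by
    rw [sum_sub_distrib] at hB; linarith
  calc exp (∑ i ∈ s, a i - B) ≤ exp (∑ i ∈ s, log (1 + a i)) := exp_le_exp.mpr hlog
    _ = ∏ i ∈ s, (1 + a i) := by
      rw [exp_sum]
      exact prod_congr rfl fun i hi => exp_log (by linarith [ha i hi])

lemma sq_mul_log_sq_add_two_le {k : ℝ} (hk : 0 < k) : k ^ 2 * (log (k ^ 2) + 2) ≤ 2 * k ^ 3 := by
  have := log_le_sub_one_of_pos hk
  rw [log_pow]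
  push_cast
  nlinarith [sq_nonneg k]

theorem prod_one_add_ksq_div_p_lower (k T₀ : ℝ) (hk : 1 ≤ k) :
    Real.exp (-(2 * k^3) + ∑ p ∈ (Finset.range (⌊T₀⌋₊ + 1)).filter Nat.Prime, k^2 / (p : ℝ))
      ≤ ∏ p ∈ (Finset.range (⌊T₀⌋₊ + 1)).filter Nat.Prime, (1 + k^2 / (p : ℝ)) ∧
    ∀ T : ℝ, 3 ≤ T →
      Real.log (Real.log T) ≤ ∑ p ∈ (Finset.range (⌊T₀⌋₊ + 1)).filter Nat.Prime, 1 / (p : ℝ) →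
      Real.exp (-(2 * k^3)) * Real.log T ^ (k^2)
        ≤ ∏ p ∈ (Finset.range (⌊T₀⌋₊ + 1)).filter Nat.Prime, (1 + k^2 / (p : ℝ)) := by
  set S := (range (⌊T₀⌋₊ + 1)).filter Nat.Prime
  have hk2 : 1 ≤ k ^ 2 := one_le_pow₀ hk
  have main : exp (-(2 * k ^ 3) + ∑ p ∈ S, k ^ 2 / (p : ℝ)) ≤ ∏ p ∈ S, (1 + k ^ 2 / (p : ℝ)) := by
    refine le_trans ?_ (exp_sum_sub_le_prod_one_add S _ (fun p _ => by positivity)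
      (sum_div_sub_log_one_add_div_le S hk2))
    gcongr
    linarith [sq_mul_log_sq_add_two_le (zero_lt_one.trans_le hk)]
  refine ⟨main, fun T hT hsum => le_trans ?_ main⟩
  rw [rpow_def_of_pos (log_pos (by linarith)), ← exp_add]
  gcongr
  calc log (log T) * k ^ 2 ≤ (∑ p ∈ S, 1 / (p : ℝ)) * k ^ 2 := by gcongr
    _ = ∑ p ∈ S, k ^ 2 / (p : ℝ) := by rw [sum_mul]; exact sum_congr rfl fun p _ => by ring
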